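/- arXiv:0811.0940 — 3 statements merged into one kernel-verified Lean document; each statement's English description precedes it below -/
import Mathlib

section
/- Let V be a finite-dimensional complex vector space, q a nondegenerate quadratic form on V with associated symmetric bilinear form B, and ω an alternating bilinear form on V. Suppose that ω(u,v) = 0 whenever u ∈ V satisfies q(u) = 0 and v ∈ V satisfies B(u,v) = 0 (i.e., v tangent to the quadric cone at the smooth point u). If dim V ≥ 3, then ω = 0. -/
/-!
Diagonalize `q` in a `q`-orthogonal basis `e`; nondegeneracy makes every `q (e i)` nonzero. Given
distinct indices `j, k, l`, choose `t` with `t² q(e k) = -q(e j)`: then `e j ± t e k` lies on the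
cone and is orthogonal to `e l`, so `ω (e j) (e l) ± t ω (e k) (e l) = 0`, and adding the two
relations gives `ω (e j) (e l) = 0`. A third index `k` exists because `dim V ≥ 3`, and the
diagonal entries vanish because `ω` is alternating.
-/

open QuadraticMap

theorem QuadraticMap.polarBilin_isSymm {R M : Type*} [CommRing R] [AddCommGroup M] [Module R M]
    (q : QuadraticForm R M) : (polarBilin q).IsSymm :=
  ⟨fun x y => polar_comm q x y⟩

section

variable {K V W : Type*} [Field K] [IsAlgClosed K] [NeZero (2 : K)]
  [AddCommGroup V] [Module K V] [AddCommGroup W] [Module K W]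

theorem apply_eq_zero_of_vanishing_on_cone_tangents (q : QuadraticForm K V)
    (ω : V →ₗ[K] V →ₗ[K] W) {x y z : V} (hxy : polar q x y = 0) (hxz : polar q x z = 0)
    (hyz : polar q y z = 0) (hy : q y ≠ 0)
    (hvan : ∀ u, q u = 0 → polar q u z = 0 → ω u z = 0) :
    ω x z = 0 := by
  obtain ⟨t, ht⟩ := IsAlgClosed.exists_pow_nat_eq (-q x / q y) two_pos
  have relation : ∀ s : K, s ^ 2 = -q x / q y → ω x z + s • ω y z = 0 := by
    intro s hs
    have hcone : q (x + s • y) = 0 := by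
      rw [QuadraticMap.map_add q, QuadraticMap.map_smul, polar_smul_right, hxy, smul_eq_mul,
        ← _root_.sq, hs, div_mul_cancel₀ _ hy]
      simp
    have htangent : polar q (x + s • y) z = 0 := by
      rw [polar_add_left, polar_smul_left, hxz, hyz, smul_zero, add_zero]
    simpa using hvan _ hcone htangent
  have htwo : (2 : K) • ω x z = 0 := by
    rw [two_smul]
    have hsum := congrArg₂ (· + ·) (relation t ht) (relation (-t) (by rwa [neg_sq]))
    simpa [neg_smul, add_add_add_comm] using hsum
  exact (smul_eq_zero.mp htwo).resolve_left two_ne_zero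

end

/-- If an alternating bilinear form `ω` vanishes on every pair `(u,v)` with `u` on the zero cone
of a nondegenerate quadratic form `q` and `v` tangent to the cone at `u`, and `dim V ≥ 3`,
then `ω = 0`. -/
theorem alt_form_vanishing_on_quadric_tangents_is_zero (V : Type*) [AddCommGroup V]
    [Module ℂ V] [FiniteDimensional ℂ V] (hdim : 3 ≤ Module.finrank ℂ V)
    (q : QuadraticForm ℂ V)
    (hnd : ∀ u : V, (∀ v : V, QuadraticMap.polar q u v = 0) → u = 0)
    (ω : V →ₗ[ℂ] V →ₗ[ℂ] ℂ) (halt : ∀ v : V, ω v v = 0)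
    (hvan : ∀ u v : V, q u = 0 → QuadraticMap.polar q u v = 0 → ω u v = 0) :
    ω = 0 := by
  have : Invertible (2 : ℂ) := invertibleOfNonzero two_ne_zero
  obtain ⟨e, he⟩ := LinearMap.BilinForm.exists_orthogonal_basis (polarBilin_isSymm q)
  have hq : ∀ i, q (e i) ≠ 0 := fun i hi =>
    he.not_isOrtho_basis_self_of_separatingLeft hnd i (by simp [polar_self, hi])
  refine e.ext fun j => e.ext fun l => ?_
  obtain rfl | hjl := eq_or_ne j l
  · simpa using halt (e j)
  obtain ⟨k, hkj, hkl⟩ := ENat.exists_ne_ne_of_three_le (by simpa using hdim) j l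
  simpa using apply_eq_zero_of_vanishing_on_cone_tangents q ω (he hkj.symm) (he hjl)
    (he hkl) (hq k) fun u => hvan u (e l)
end

section
/- Let V be a finite-dimensional complex vector space, and let C ⊆ V be an irreducible algebraic cone of codimension 1 in V that is not a linear subspace. Define Ĉ ⊆ Λ²V to be the set of elements u ∧ v where u is a smooth point of C and v is tangent to C at u. Then Ĉ spans Λ²V; equivalently, the only element φ ∈ Λ²V* vanishing on all of Ĉ is φ = 0. -/
/-
At a smooth point `x` of `C = {p = 0}` the form `ω(x, ·)` kills the tangent hyperplane, so it is
proportional to `dpₓ`: the minors `ω(x, eᵢ) ∂ⱼp(x) - ω(x, eⱼ) ∂ᵢp(x)` vanish on `C`. By the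
Nullstellensatz and homogeneity each minor is a constant multiple of `p`, and Euler's identity
together with `ω(x, x) = 0` identifies the constant as `-d ω(eᵢ, eⱼ)`. The cyclic sum of the minors
against the partials `∂ₖp` vanishes identically, which yields the linear relations
`ω(eᵢ, eⱼ) ∂ₖp + ω(eⱼ, eₖ) ∂ᵢp + ω(eₖ, eᵢ) ∂ⱼp = 0`. So if `ω(eᵢ, eⱼ) ≠ 0`, every directional
derivative of `p` along `L = ker ω(eⱼ, ·) ∩ ker ω(·, eᵢ)` vanishes and `C` is invariant under
translation by `L`. Since `C` is a cone, either `C = L`, or `C` contains, together with a point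
`x ∉ L`, the whole hyperplane `ker (g x • f - f x • g)` (`f`, `g` the two functionals cutting out
`L`), and then equals it because `p` is irreducible. Either way `C` is a linear subspace.
-/

open MvPolynomial

lemma LinearMap.apply_eq_sum_smul_single {σ R M : Type*} [Fintype σ] [DecidableEq σ] [Semiring R]
    [AddCommMonoid M] [Module R M] (f : (σ → R) →ₗ[R] M) (x : σ → R) :
    f x = ∑ i, x i • f (Pi.single i 1) := by
  conv_lhs => rw [← Finset.univ_sum_single x]
  simp only [map_sum, ← map_smul, ← Pi.single_smul', smul_eq_mul, mul_one]

lemma LinearMap.exists_sub_smul_mem_ker_inf_ker {K V : Type*} [Field K] [AddCommGroup V]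
    [Module K V] {f g : Module.Dual K V} {x y : V} (hx : x ∉ LinearMap.ker f ⊓ LinearMap.ker g)
    (hy : g x * f y = f x * g y) : ∃ t : K, y - t • x ∈ LinearMap.ker f ⊓ LinearMap.ker g := by
  simp only [Submodule.mem_inf, LinearMap.mem_ker, not_and_or] at hx ⊢
  simp only [map_sub, map_smul, smul_eq_mul]
  rcases hx with hf | hg
  · refine ⟨f y / f x, by field_simp; ring, ?_⟩
    field_simp
    linear_combination -hy
  · refine ⟨g y / g x, ?_, by field_simp; ring⟩
    field_simp
    linear_combination hy

namespace MvPolynomial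

section LinearForm

variable {σ K : Type*} [Fintype σ] [DecidableEq σ] [Field K]

noncomputable def linearFormPoly (f : Module.Dual K (σ → K)) : MvPolynomial σ K :=
  ∑ i, C (f (Pi.single i 1)) * X i

@[simp]
lemma eval_linearFormPoly (f : Module.Dual K (σ → K)) (x : σ → K) :
    eval x (linearFormPoly f) = f x := by
  simp [linearFormPoly, f.apply_eq_sum_smul_single x, mul_comm]

lemma isHomogeneous_linearFormPoly (f : Module.Dual K (σ → K)) :
    (linearFormPoly f).IsHomogeneous 1 :=
  IsHomogeneous.sum _ _ _ fun i _ => isHomogeneous_C_mul_X _ i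

lemma irreducible_linearFormPoly {f : Module.Dual K (σ → K)} (hf : f ≠ 0) :
    Irreducible (linearFormPoly f) := by
  have hne : linearFormPoly f ≠ 0 := by
    obtain ⟨x, hx⟩ := DFunLike.ne_iff.mp hf
    exact fun h => hx (by simpa [h] using (eval_linearFormPoly f x).symm)
  obtain ⟨m, hm⟩ := ne_zero_iff.mp hne
  refine irreducible_of_totalDegree_eq_one ((isHomogeneous_linearFormPoly f).totalDegree hne)
    fun r hr => isUnit_iff_ne_zero.mpr ?_
  rintro rfl
  exact hm (zero_dvd_iff.mp (hr m))

end LinearForm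

variable {σ K : Type*} [Field K]

lemma IsHomogeneous.eval_smul [Fintype σ] {p : MvPolynomial σ K} {d : ℕ}
    (hp : p.IsHomogeneous d) (c : K) (x : σ → K) : eval (c • x) p = c ^ d * eval x p := by
  rw [eval_eq', eval_eq', Finset.mul_sum]
  refine Finset.sum_congr rfl fun m hm => ?_
  have hdeg : ∑ i, m i = d := by
    rw [← Finsupp.degree_eq_sum, Finsupp.degree_eq_weight_one]
    exact hp (mem_support_iff.mp hm)
  simp only [Pi.smul_apply, smul_eq_mul, mul_pow, Finset.prod_mul_distrib,
    Finset.prod_pow_eq_pow_sum, hdeg]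
  ring

lemma IsHomogeneous.degree_ne_zero_of_irreducible {p : MvPolynomial σ K} {d : ℕ}
    (hp : p.IsHomogeneous d) (hirr : Irreducible p) : d ≠ 0 := by
  rintro rfl
  have hdeg := (totalDegree_zero_iff_isHomogeneous σ).mpr hp
  have hc : coeff 0 p ≠ 0 := fun h =>
    hirr.ne_zero (by rw [totalDegree_eq_zero_iff_eq_C.mp hdeg, h, map_zero])
  exact hirr.not_isUnit (isUnit_iff_totalDegree_of_isReduced.mpr ⟨hc.isUnit, hdeg⟩)

lemma IsHomogeneous.exists_eq_C_mul_of_dvd {p q : MvPolynomial σ K} {d : ℕ}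
    (hp : p.IsHomogeneous d) (hq : q.IsHomogeneous d) (hp0 : p ≠ 0) (hpq : p ∣ q) :
    ∃ c : K, q = C c * p := by
  obtain ⟨r, rfl⟩ := hpq
  obtain rfl | hr := eq_or_ne r 0
  · exact ⟨0, by simp⟩
  have hdeg : r.totalDegree = 0 := by
    have := hq.totalDegree (mul_ne_zero hp0 hr)
    rw [totalDegree_mul_of_isDomain hp0 hr, hp.totalDegree hp0] at this
    omega
  exact ⟨coeff 0 r, by rw [mul_comm, ← totalDegree_eq_zero_iff_eq_C.mp hdeg]⟩

lemma derivative_aeval {R : Type*} [CommSemiring R] [Fintype σ] (s : σ → Polynomial R)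
    (q : MvPolynomial σ R) :
    Polynomial.derivative (aeval s q)
      = ∑ i, Polynomial.derivative (s i) * aeval s (pderiv i q) := by
  classical
  induction q using MvPolynomial.induction_on with
  | C a => simp
  | add f g hf hg => simp only [map_add, hf, hg, mul_add, Finset.sum_add_distrib]
  | mul_X f j hf =>
    simp only [map_mul, aeval_X, Polynomial.derivative_mul, hf, Derivation.leibniz, pderiv_X,
      smul_eq_mul, map_add, Pi.single_apply, mul_add, Finset.sum_add_distrib, Finset.sum_mul]
    simp only [apply_ite (aeval s), map_one, map_zero, mul_ite, mul_one, mul_zero,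
      Finset.sum_ite_eq, Finset.mem_univ, if_true]
    rw [add_comm, mul_comm (aeval s f)]
    exact congr_arg _ (Finset.sum_congr rfl fun i _ => by ring)

lemma eval_add_eq_of_sum_C_mul_pderiv_eq_zero [Fintype σ] [CharZero K] {q : MvPolynomial σ K}
    {v : σ → K} (hv : ∑ i, C (v i) * pderiv i q = 0) (y : σ → K) :
    eval (y + v) q = eval y q := by
  set s : σ → Polynomial K := fun i => Polynomial.C (y i) + Polynomial.C (v i) * Polynomial.X
  have hline (z : K) : Polynomial.eval z (aeval s q) = eval (y + z • v) q := by
    have hs : (fun i => Polynomial.aeval z (s i)) = y + z • v := by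
      funext i
      simp only [s, map_add, map_mul, Polynomial.aeval_C, Polynomial.aeval_X, Pi.add_apply,
        Pi.smul_apply, smul_eq_mul, Algebra.algebraMap_self, RingHom.id_apply, mul_comm]
    rw [← Polynomial.coe_aeval_eq_eval, ← AlgHom.comp_apply, comp_aeval, hs]
    rfl
  have hconst : Polynomial.derivative (aeval s q) = 0 := by
    have h := congr_arg (aeval s) hv
    simp only [map_sum, map_mul, aeval_C, map_zero, Polynomial.algebraMap_eq] at h
    simpa [derivative_aeval, s] using h
  have h := Polynomial.eq_C_of_derivative_eq_zero hconst
  have h1 := hline 1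
  have h0 := hline 0
  rw [h, Polynomial.eval_C] at h1 h0
  simpa using h1.symm.trans h0

section Nullstellensatz

variable [Finite σ] [IsAlgClosed K]

lemma dvd_of_forall_eval_eq_zero {q r : MvPolynomial σ K} (hq : Prime q)
    (h : ∀ x, eval x q = 0 → eval x r = 0) : q ∣ r := by
  have hr : r ∈ vanishingIdeal K (zeroLocus K (Ideal.span {q})) :=
    (mem_vanishingIdeal_iff).mpr fun x hx => h x (hx q (Ideal.subset_span rfl))
  rw [vanishingIdeal_zeroLocus_eq_radical, Ideal.mem_radical_iff] at hr
  obtain ⟨m, hm⟩ := hr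
  exact hq.dvd_of_dvd_pow (Ideal.mem_span_singleton.mp hm)

lemma setOf_eval_eq_zero_eq_of_subset {p q : MvPolynomial σ K}
    (hp : Irreducible p) (hq : Irreducible q)
    (h : {x | eval x q = 0} ⊆ {x | eval x p = 0}) :
    {x | eval x p = 0} = {x | eval x q = 0} := by
  obtain ⟨u, rfl⟩ := (hq.associated_of_dvd hp
    (dvd_of_forall_eval_eq_zero hq.prime fun x hx => h hx)).symm
  ext x
  have hu : eval x (u : MvPolynomial σ K) ≠ 0 := (u.isUnit.map (eval x)).ne_zero
  simp [hu]

end Nullstellensatz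

section Hypersurface

variable [Fintype σ] [DecidableEq σ] [IsAlgClosed K] {p : MvPolynomial σ K}

lemma setOf_eval_eq_zero_eq_ker_of_ker_subset (hp : Irreducible p) (f : Module.Dual K (σ → K))
    (h : ∀ x, f x = 0 → eval x p = 0) : {x | eval x p = 0} = LinearMap.ker f := by
  by_cases hf : f = 0
  · subst hf
    ext x
    simpa using h x rfl
  · rw [setOf_eval_eq_zero_eq_of_subset hp (irreducible_linearFormPoly hf)
      fun y hy => h y (by simpa using hy)]
    ext x
    simp

lemma exists_submodule_eq_setOf_eval_eq_zero {d : ℕ} (hirr : Irreducible p)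
    (hhom : p.IsHomogeneous d) (f g : Module.Dual K (σ → K))
    (hinv : ∀ v ∈ LinearMap.ker f ⊓ LinearMap.ker g, ∀ y, eval (y + v) p = eval y p) :
    ∃ W : Submodule K (σ → K), {x | eval x p = 0} = W := by
  have h0 : eval 0 p = 0 := by
    simpa [zero_pow (hhom.degree_ne_zero_of_irreducible hirr)] using hhom.eval_smul 0 0
  set L : Submodule K (σ → K) := LinearMap.ker f ⊓ LinearMap.ker g
  by_cases hsub : {x | eval x p = 0} ⊆ L
  · refine ⟨L, hsub.antisymm fun v hv => ?_⟩
    show eval v p = 0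
    rw [← zero_add v, hinv v hv 0, h0]
  · obtain ⟨x, hx, hxK⟩ := Set.not_subset.mp hsub
    refine ⟨LinearMap.ker (g x • f - f x • g),
      setOf_eval_eq_zero_eq_ker_of_ker_subset hirr _ fun y hy => ?_⟩
    obtain ⟨t, ht⟩ :=
      LinearMap.exists_sub_smul_mem_ker_inf_ker hxK (by simpa [sub_eq_zero] using hy)
    rw [← add_sub_cancel (t • x) y, hinv _ ht, hhom.eval_smul, show eval x p = 0 from hx,
      mul_zero]

end Hypersurface

end MvPolynomial

namespace HatCone

variable {σ K : Type*} [Fintype σ] [DecidableEq σ] [Field K]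
  {p : MvPolynomial σ K} {ω : (σ → K) →ₗ[K] (σ → K) →ₗ[K] K}

def VanishesOnHatCone (ω : (σ → K) →ₗ[K] (σ → K) →ₗ[K] K) (p : MvPolynomial σ K) : Prop :=
  ∀ u : σ → K, eval u p = 0 → (∃ i, eval u (pderiv i p) ≠ 0) →
    ∀ v : σ → K, ∑ i, v i * eval u (pderiv i p) = 0 → ω u v = 0

noncomputable def formMinor (ω : (σ → K) →ₗ[K] (σ → K) →ₗ[K] K) (p : MvPolynomial σ K)
    (i j : σ) : MvPolynomial σ K :=
  linearFormPoly (ω.flip (Pi.single i 1)) * pderiv j p -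
    linearFormPoly (ω.flip (Pi.single j 1)) * pderiv i p

lemma isHomogeneous_formMinor {d : ℕ} (hhom : p.IsHomogeneous d) (hd : d ≠ 0) (i j : σ) :
    (formMinor ω p i j).IsHomogeneous d := by
  have hdeg : 1 + (d - 1) = d := by omega
  have h (i j : σ) : (linearFormPoly (ω.flip (Pi.single i 1)) * pderiv j p).IsHomogeneous d :=
    hdeg ▸ (isHomogeneous_linearFormPoly _).mul hhom.pderiv
  exact (h i j).sub (h j i)

lemma eval_formMinor_eq_zero (hvan : VanishesOnHatCone ω p) {x : σ → K} (hx : eval x p = 0)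
    (i j : σ) : eval x (formMinor ω p i j) = 0 := by
  simp only [formMinor, map_sub, eval_mul, eval_linearFormPoly, LinearMap.flip_apply]
  by_cases hsmooth : ∃ k, eval x (pderiv k p) ≠ 0
  · have htangent := hvan x hx hsmooth
      (eval x (pderiv j p) • Pi.single i 1 - eval x (pderiv i p) • Pi.single j 1)
      (by simp [mul_sub, Finset.sum_sub_distrib, Pi.single_apply, mul_comm])
    simpa [mul_comm] using htangent
  · simp only [not_exists, not_not] at hsmooth
    simp [hsmooth]

lemma sum_X_mul_linearFormPoly_flip_eq_zero [Infinite K] (halt : ω.IsAlt) :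
    ∑ i, X i * linearFormPoly (ω.flip (Pi.single i 1)) = 0 := by
  refine MvPolynomial.funext fun x => ?_
  simp [← halt x, (ω x).apply_eq_sum_smul_single x]

variable [IsAlgClosed K] {d : ℕ}

lemma formMinor_eq_C_mul (hirr : Irreducible p) (hhom : p.IsHomogeneous d) (halt : ω.IsAlt)
    (hvan : VanishesOnHatCone ω p) (i j : σ) :
    formMinor ω p i j = C (-(d * ω (Pi.single i 1) (Pi.single j 1))) * p := by
  have hc (i j : σ) : ∃ c, formMinor ω p i j = C c * p :=
    hhom.exists_eq_C_mul_of_dvd (isHomogeneous_formMinor hhom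
      (hhom.degree_ne_zero_of_irreducible hirr) i j) hirr.ne_zero
      (dvd_of_forall_eval_eq_zero hirr.prime fun x hx => eval_formMinor_eq_zero hvan hx i j)
  choose c hc using hc
  have hsum : (∑ k, C (c k j) * X k) * p
      = -(C (d : K) * linearFormPoly (ω.flip (Pi.single j 1))) * p := by
    calc (∑ k, C (c k j) * X k) * p = ∑ k, X k * formMinor ω p k j := by
          simp only [hc, Finset.sum_mul]
          exact Finset.sum_congr rfl fun k _ => by ring
      _ = (∑ k, X k * linearFormPoly (ω.flip (Pi.single k 1))) * pderiv j p
          - linearFormPoly (ω.flip (Pi.single j 1)) * ∑ k, X k * pderiv k p := by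
          rw [Finset.sum_mul, Finset.mul_sum, ← Finset.sum_sub_distrib]
          exact Finset.sum_congr rfl fun k _ => by unfold formMinor; ring
      _ = -(C (d : K) * linearFormPoly (ω.flip (Pi.single j 1))) * p := by
          rw [sum_X_mul_linearFormPoly_flip_eq_zero halt, hhom.sum_X_mul_pderiv, nsmul_eq_mul,
            map_natCast]
          ring
  have hcoeff := congr_arg (eval (Pi.single i 1)) (mul_right_cancel₀ hirr.ne_zero hsum)
  simp only [map_sum, map_mul, map_neg, eval_C, eval_X, eval_linearFormPoly,
    LinearMap.flip_apply, Pi.single_apply, mul_ite, mul_one, mul_zero, Finset.sum_ite_eq',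
    Finset.mem_univ, if_true] at hcoeff
  rw [hc, hcoeff]

lemma cyclic_sum_C_mul_pderiv_eq_zero [CharZero K] (hirr : Irreducible p)
    (hhom : p.IsHomogeneous d) (halt : ω.IsAlt) (hvan : VanishesOnHatCone ω p) (i j k : σ) :
    C (ω (Pi.single i 1) (Pi.single j 1)) * pderiv k p
      + C (ω (Pi.single j 1) (Pi.single k 1)) * pderiv i p
      + C (ω (Pi.single k 1) (Pi.single i 1)) * pderiv j p = 0 := by
  have hcyclic : formMinor ω p i j * pderiv k p + formMinor ω p j k * pderiv i p
      + formMinor ω p k i * pderiv j p = 0 := by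
    unfold formMinor
    ring
  simp only [formMinor_eq_C_mul hirr hhom halt hvan, map_neg, map_mul, map_natCast] at hcyclic
  have hdp : (d : MvPolynomial σ K) * p ≠ 0 :=
    mul_ne_zero (Nat.cast_ne_zero.mpr (hhom.degree_ne_zero_of_irreducible hirr)) hirr.ne_zero
  refine (mul_eq_zero.mp ?_).resolve_left hdp
  linear_combination -hcyclic

lemma sum_C_mul_pderiv_eq_zero [CharZero K] (hirr : Irreducible p)
    (hhom : p.IsHomogeneous d) (halt : ω.IsAlt) (hvan : VanishesOnHatCone ω p) {i j : σ}
    (hij : ω (Pi.single i 1) (Pi.single j 1) ≠ 0) {v : σ → K}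
    (hvj : ω (Pi.single j 1) v = 0) (hvi : ω v (Pi.single i 1) = 0) :
    ∑ k, C (v k) * pderiv k p = 0 := by
  rw [(ω (Pi.single j 1)).apply_eq_sum_smul_single v] at hvj
  rw [← ω.flip_apply, (ω.flip (Pi.single i 1)).apply_eq_sum_smul_single v] at hvi
  have hsum := Finset.sum_eq_zero fun k (_ : k ∈ Finset.univ) =>
    (congr_arg (C (v k) * ·) (cyclic_sum_C_mul_pderiv_eq_zero hirr hhom halt hvan i j k)).trans
      (mul_zero _)
  simp only [mul_add, Finset.sum_add_distrib, ← mul_assoc, ← map_mul, ← Finset.sum_mul,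
    ← map_sum] at hsum
  simp only [smul_eq_mul, LinearMap.flip_apply] at hvj hvi
  rw [hvj, hvi, map_zero, zero_mul, zero_mul, add_zero, add_zero] at hsum
  refine (mul_eq_zero.mp ?_).resolve_left (C_ne_zero.mpr hij)
  rw [Finset.mul_sum, ← hsum]
  exact Finset.sum_congr rfl fun k _ => by rw [mul_comm (v k), map_mul]; ring

end HatCone

open HatCone

/-- Nondegeneracy of `Ĉ`: if `C ⊆ ℂⁿ` is an irreducible codimension-one algebraic cone (the zero
set of an irreducible homogeneous polynomial `p`) which is not a linear subspace, then the only
2-form (alternating bilinear form) vanishing on all `u ∧ v` with `u` a smooth point of `C` and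
`v` tangent to `C` at `u` is the zero form. -/
theorem hat_cone_nondegenerate (n : ℕ) (p : MvPolynomial (Fin n) ℂ) (d : ℕ)
    (hirr : Irreducible p) (hhom : p.IsHomogeneous d)
    (hnotlin : ∀ W : Submodule ℂ (Fin n → ℂ),
      {v : Fin n → ℂ | eval v p = 0} ≠ (W : Set (Fin n → ℂ)))
    (ω : (Fin n → ℂ) →ₗ[ℂ] (Fin n → ℂ) →ₗ[ℂ] ℂ) (halt : ∀ v, ω v v = 0)
    (hvan : ∀ u : Fin n → ℂ, eval u p = 0 →
      (∃ i : Fin n, eval u (pderiv i p) ≠ 0) →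
      ∀ v : Fin n → ℂ, (∑ i : Fin n, v i * eval u (pderiv i p)) = 0 → ω u v = 0) :
    ω = 0 := by
  refine LinearMap.ext_basis (Pi.basisFun ℂ (Fin n)) (Pi.basisFun ℂ (Fin n)) fun i j => ?_
  rw [Pi.basisFun_apply, Pi.basisFun_apply, LinearMap.zero_apply, LinearMap.zero_apply]
  by_contra hij
  obtain ⟨W, hW⟩ := exists_submodule_eq_setOf_eval_eq_zero hirr hhom
    (ω (Pi.single j 1)) (ω.flip (Pi.single i 1)) fun v hv =>
      eval_add_eq_of_sum_C_mul_pderiv_eq_zero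
        (sum_C_mul_pderiv_eq_zero hirr hhom halt hvan hij hv.1 hv.2)
  exact hnotlin W hW
end

section
/- Let V be a complex vector space of dimension n ≥ 3 and q a nondegenerate quadratic form on V with zero cone C = {q = 0}. For every hyperplane H ⊆ V there exists a smooth point u ∈ C with u ∉ H. (Equivalently, the smooth points of C span V.) -/
/-!
If every isotropic vector lay in the hyperplane `H`, pick `w ∉ H`; then `q w ≠ 0`. Writing
`B = polar q`, for `v ∈ H` the quadratic polynomial `t ↦ q (v + t • w) = q w t² + B(v, w) t + q v`
vanishes only at `t = 0`, so over an algebraically closed field both its lower coefficients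
vanish. Hence `q` vanishes on `H` and `B(v, w) = 0`, so every `v ∈ H` is `B`-orthogonal to
`H + K w = V`, and a nonzero such `v` contradicts nondegeneracy.
-/

open Module Polynomial QuadraticMap

lemma IsAlgClosed.exists_quadratic_eq_zero {K : Type*} [Field K] [IsAlgClosed K] {a : K}
    (ha : a ≠ 0) (b c : K) : ∃ t : K, a * t ^ 2 + b * t + c = 0 := by
  obtain ⟨t, ht⟩ := IsAlgClosed.exists_root (C a * X ^ 2 + C b * X + C c)
    (by rw [degree_quadratic ha]; decide)
  exact ⟨t, by simpa using ht⟩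

lemma IsAlgClosed.quadratic_coeffs_eq_zero_of_roots_eq_zero {K : Type*} [Field K] [IsAlgClosed K]
    {a b c : K} (ha : a ≠ 0) (hroots : ∀ t : K, a * t ^ 2 + b * t + c = 0 → t = 0) :
    b = 0 ∧ c = 0 := by
  have hc : c = 0 := by
    obtain ⟨t, ht⟩ := exists_quadratic_eq_zero ha b c
    simpa [hroots t ht] using ht
  refine ⟨?_, hc⟩
  have hroot : a * (-b / a) ^ 2 + b * (-b / a) + c = 0 := by
    field_simp
    rw [hc]
    ring
  simpa [ha] using hroots _ hroot

namespace QuadraticMap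

variable {R M : Type*} [CommRing R] [AddCommGroup M] [Module R M]

lemma map_add_smul_eq (Q : QuadraticForm R M) (v w : M) (t : R) :
    Q (v + t • w) = Q w * t ^ 2 + polar Q v w * t + Q v := by
  rw [QuadraticMap.map_add (⇑Q), polar_smul_right, QuadraticMap.map_smul, smul_eq_mul, smul_eq_mul]
  ring

end QuadraticMap

section IsotropicInSubmodule

variable {K V : Type*} [Field K] [IsAlgClosed K] [AddCommGroup V] [Module K V]
  {q : QuadraticForm K V} {H : Submodule K V} {w : V}

lemma map_eq_zero_and_polar_eq_zero_of_isotropic_le (hH : ∀ u, q u = 0 → u ∈ H) (hw : w ∉ H)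
    {v : V} (hv : v ∈ H) : q v = 0 ∧ polar q v w = 0 := by
  have hqw : q w ≠ 0 := fun h => hw (hH w h)
  have hroots : ∀ t : K, q w * t ^ 2 + polar q v w * t + q v = 0 → t = 0 := by
    intro t ht
    rw [← map_add_smul_eq] at ht
    by_contra ht0
    have htw : t • w ∈ H := by simpa using H.sub_mem (hH _ ht) hv
    exact hw ((H.smul_mem_iff ht0).mp htw)
  exact (IsAlgClosed.quadratic_coeffs_eq_zero_of_roots_eq_zero hqw hroots).symm

lemma polar_eq_zero_of_isotropic_le (hH : ∀ u, q u = 0 → u ∈ H) (hw : w ∉ H)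
    {v x : V} (hv : v ∈ H) (hx : x ∈ H ⊔ Submodule.span K {w}) : polar q v x = 0 := by
  obtain ⟨h, hh, y, hy, rfl⟩ := Submodule.mem_sup.mp hx
  obtain ⟨c, rfl⟩ := Submodule.mem_span_singleton.mp hy
  have hq (u : V) (hu : u ∈ H) : q u = 0 :=
    (map_eq_zero_and_polar_eq_zero_of_isotropic_le hH hw hu).1
  have hvh : polar q v h = q (v + h) - q v - q h := rfl
  rw [polar_add_right, polar_smul_right, hvh, hq _ (H.add_mem hv hh), hq v hv, hq h hh,
    (map_eq_zero_and_polar_eq_zero_of_isotropic_le hH hw hv).2]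
  simp

end IsotropicInSubmodule

/-- For a nondegenerate quadratic form on a complex vector space of dimension at least 3,
every hyperplane misses some smooth point of the zero cone. -/
theorem smooth_points_of_quadric_not_in_hyperplane (V : Type*) [AddCommGroup V] [Module ℂ V]
    [FiniteDimensional ℂ V] (hdim : 3 ≤ Module.finrank ℂ V)
    (q : QuadraticForm ℂ V)
    (hnd : ∀ u : V, (∀ v : V, QuadraticMap.polar q u v = 0) → u = 0) :
    ∀ H : Submodule ℂ V, Module.finrank ℂ H + 1 = Module.finrank ℂ V →
      ∃ u : V, u ≠ 0 ∧ q u = 0 ∧ u ∉ H := by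
  intro H hH
  by_contra! hcon
  have hiso : ∀ u, q u = 0 → u ∈ H := fun u hu => by
    by_cases hu0 : u = 0
    · simp [hu0]
    · exact hcon u hu0 hu
  obtain ⟨w, hw⟩ : ∃ w, w ∉ H := SetLike.exists_not_mem_of_ne_top H
    (fun h => by rw [h, finrank_top] at hH; omega)
  have hsup : H ⊔ Submodule.span ℂ {w} = ⊤ :=
    Submodule.eq_top_of_finrank_eq (by rw [Submodule.finrank_sup_span_singleton hw, hH])
  obtain ⟨v, hvH, hv0⟩ := Submodule.exists_mem_ne_zero_of_ne_bot (p := H)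
    (fun h => by rw [h, finrank_bot] at hH; omega)
  exact hv0 (hnd v fun x =>
    polar_eq_zero_of_isotropic_le hiso hw hvH (hsup ▸ Submodule.mem_top))
end
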